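/- arXiv:math/0702003 — 3 statements merged into one kernel-verified Lean document; each statement's English description precedes it below -/
import Mathlib

section
/- If f_1, f_2 in A_R(D) satisfy inf over the closed disc of (|f_1|+|f_2|) > 0 and f_1 is positive on the real zeros of f_2, then between any two consecutive real zeros of f_2 in [-1,1] there is an even number of real zeros of f_1 (counted with multiplicity): the parity interlacing property. -/
open Complex Metric Set Filter Topology

private 
lemma sameSign {F : ℝ → ℝ} {u v : ℝ} (huv : u ≤ v) (hF : ContinuousOn F (Set.Icc u v))
    (hne : ∀ t ∈ Set.Icc u v, F t ≠ 0) : 0 < F u * F v := by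
  have hu : F u ≠ 0 := hne u (Set.left_mem_Icc.2 huv)
  have hv : F v ≠ 0 := hne v (Set.right_mem_Icc.2 huv)
  rcases hu.lt_or_gt with hu' | hu' <;> rcases hv.lt_or_gt with hv' | hv'
  · nlinarith
  · exfalso
    obtain ⟨c, hc, hc0⟩ := intermediate_value_Icc huv hF ⟨hu'.le, hv'.le⟩
    exact hne c hc hc0
  · exfalso
    obtain ⟨c, hc, hc0⟩ := intermediate_value_Icc' huv hF ⟨hv'.le, hu'.le⟩
    exact hne c hc hc0
  · nlinarith

private lemma parity_lemma (S : Finset ℝ) : ∀ (F : ℝ → ℝ) (n : ℝ → ℕ) (a b : ℝ), a < b →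
    ContinuousOn F (Set.Icc a b) →
    (∀ x ∈ Set.Icc a b, F x = 0 → x ∈ S) →
    (∀ x ∈ S, x ∈ Set.Ioo a b) →
    (∀ x ∈ S, ∃ ε > 0, ∃ g : ℝ → ℝ, ContinuousOn g (Set.Ioo (x-ε) (x+ε)) ∧
       ∀ t ∈ Set.Ioo (x-ε) (x+ε), g t ≠ 0 ∧ F t = (t - x)^(n x) * g t) →
    0 < F a * F b * (-1:ℝ)^(∑ x ∈ S, n x) := by
  induction S using Finset.strongInduction with
  | _ S ih =>
  intro F n a b hab hF hzero hsub hfact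
  rcases S.eq_empty_or_nonempty with rfl | hS
  · simp only [Finset.sum_empty, pow_zero, mul_one]
    exact sameSign hab.le hF fun t ht h0 => absurd (hzero t ht h0) (Finset.notMem_empty t)
  · set x := S.max' hS with hxdef
    have hxS : x ∈ S := S.max'_mem hS
    obtain ⟨hax, hxb⟩ := hsub x hxS
    obtain ⟨ε, hε, g, hg, hfg⟩ := hfact x hxS
    -- choose t₀ just below x
    set L : ℝ := max (max a (x - ε)) ((insert a (S.erase x)).max' (Finset.insert_nonempty a _)) with hLdef
    have hLx : L < x := by
      apply max_lt (max_lt hax (by linarith))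
      rw [Finset.max'_lt_iff]
      intro y hy
      rcases Finset.mem_insert.1 hy with rfl | hy
      · exact hax
      · rcases Finset.mem_erase.1 hy with ⟨hne, hyS⟩
        exact lt_of_le_of_ne (S.le_max' y hyS) hne
    set t₀ : ℝ := (L + x) / 2 with ht₀def
    have hLt₀ : L < t₀ := by simp only [ht₀def]; linarith
    have ht₀x : t₀ < x := by simp only [ht₀def]; linarith
    have hat₀ : a < t₀ := lt_of_le_of_lt (le_trans (le_max_left _ _) (le_max_left _ _)) hLt₀
    have hεt₀ : x - ε < t₀ := lt_of_le_of_lt (le_trans (le_max_right _ _) (le_max_left _ _)) hLt₀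
    have herase_lt : ∀ y ∈ S.erase x, y < t₀ := fun y hy =>
      lt_of_le_of_lt (le_trans ((insert a (S.erase x)).le_max' y (Finset.mem_insert_of_mem hy)) (le_max_right _ _)) hLt₀
    -- choose t₁ just above x
    set t₁ : ℝ := (x + min b (x + ε)) / 2 with ht₁def
    have hxt₁ : x < t₁ := by
      have : x < min b (x + ε) := lt_min hxb (by linarith)
      simp only [ht₁def]; linarith
    have ht₁b : t₁ < b := by
      have : min b (x + ε) ≤ b := min_le_left _ _
      simp only [ht₁def]; linarith
    have ht₁ε : t₁ < x + ε := by
      have : min b (x + ε) ≤ x + ε := min_le_right _ _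
      simp only [ht₁def]; linarith
    have ht₀mem : t₀ ∈ Set.Ioo (x - ε) (x + ε) := ⟨hεt₀, by linarith⟩
    have ht₁mem : t₁ ∈ Set.Ioo (x - ε) (x + ε) := ⟨by linarith, ht₁ε⟩
    obtain ⟨hgt₀, hFt₀⟩ := hfg t₀ ht₀mem
    obtain ⟨hgt₁, hFt₁⟩ := hfg t₁ ht₁mem
    -- IH on [a, t₀] with S.erase x
    have h1 : 0 < F a * F t₀ * (-1:ℝ)^(∑ y ∈ S.erase x, n y) := by
      apply ih (S.erase x) (Finset.erase_ssubset hxS) F n a t₀ hat₀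
      · exact hF.mono (Set.Icc_subset_Icc le_rfl (by linarith))
      · intro y hy h0
        have hyS : y ∈ S := hzero y ⟨hy.1, by linarith [hy.2]⟩ h0
        exact Finset.mem_erase.2 ⟨by rintro rfl; exact absurd hy.2 (not_le.2 ht₀x), hyS⟩
      · intro y hy
        rcases Finset.mem_erase.1 hy with ⟨hne, hyS⟩
        exact ⟨(hsub y hyS).1, herase_lt y hy⟩
      · intro y hy
        exact hfact y (Finset.mem_erase.1 hy).2
    -- sign of g constant on [t₀, t₁]
    have hgg : 0 < g t₀ * g t₁ := by
      apply sameSign (by linarith) (hg.mono ?_) ?_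
      · exact fun t ht => ⟨by linarith [ht.1], by linarith [ht.2]⟩
      · intro t ht
        exact (hfg t ⟨by linarith [ht.1], by linarith [ht.2]⟩).1
    -- F has no zeros on [t₁, b]
    have h3 : 0 < F t₁ * F b := by
      apply sameSign ht₁b.le (hF.mono (Set.Icc_subset_Icc (by linarith) le_rfl))
      intro t ht h0
      have htS : t ∈ S := hzero t ⟨by linarith [ht.1], ht.2⟩ h0
      have : t ≤ x := S.le_max' t htS
      linarith [ht.1]
    -- local sign flip
    have hp0 : 0 < (x - t₀) ^ (n x) := pow_pos (by linarith) _
    have hp1 : 0 < (t₁ - x) ^ (n x) := pow_pos (by linarith) _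
    have hkey : (t₀ - x) ^ (n x) * (-1:ℝ) ^ (n x) = (x - t₀) ^ (n x) := by
      rw [← mul_pow]; congr 1; ring
    have h2 : 0 < F t₀ * F t₁ * (-1:ℝ)^(n x) := by
      have : F t₀ * F t₁ * (-1:ℝ)^(n x)
          = ((x - t₀) ^ (n x)) * ((t₁ - x) ^ (n x)) * (g t₀ * g t₁) := by
        rw [hFt₀, hFt₁, ← hkey]; ring
      rw [this]
      positivity
    -- combine
    have hsum : ∑ y ∈ S, n y = (∑ y ∈ S.erase x, n y) + n x := (Finset.sum_erase_add S n hxS).symm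
    have hFt₀ne : F t₀ ≠ 0 := by
      rw [hFt₀]
      exact mul_ne_zero (pow_ne_zero _ (by linarith)) hgt₀
    have ht₀sq : 0 < F t₀ ^ 2 := by positivity
    have hFt₁ne : F t₁ ≠ 0 := by
      rw [hFt₁]
      exact mul_ne_zero (pow_ne_zero _ (by linarith)) hgt₁
    have ht₁sq : 0 < F t₁ ^ 2 := by positivity
    rw [hsum, pow_add]
    nlinarith [mul_pos h1 (mul_pos h2 h3), mul_pos ht₀sq ht₁sq]

/-- The disc algebra: continuous on the closed unit disc, holomorphic on the open disc. -/
def IsDiscAlg (f : ℂ → ℂ) : Prop :=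
  ContinuousOn f (closedBall 0 1) ∧ DifferentiableOn ℂ f (ball 0 1)

/-- The real disc algebra: disc algebra functions with the symmetry f(z) = conj (f (conj z)). -/
def IsRealDiscAlg (f : ℂ → ℂ) : Prop :=
  IsDiscAlg f ∧ ∀ z ∈ closedBall (0:ℂ) 1, f z = (starRingEnd ℂ) (f ((starRingEnd ℂ) z))

theorem parity_interlacing_property (f₁ f₂ : ℂ → ℂ) (δ : ℝ)
    (hf₁ : IsRealDiscAlg f₁) (hf₂ : IsRealDiscAlg f₂) (hδ : 0 < δ)
    (hcorona : ∀ z ∈ closedBall (0:ℂ) 1, δ ≤ ‖f₁ z‖ + ‖f₂ z‖)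
    (hPOZ : ∀ lam₁ ∈ Set.Icc (-1:ℝ) 1, ∀ lam₂ ∈ Set.Icc (-1:ℝ) 1,
      f₂ (lam₁:ℂ) = 0 → f₂ (lam₂:ℂ) = 0 → 0 < (f₁ (lam₁:ℂ)).re * (f₁ (lam₂:ℂ)).re)
    (a b : ℝ) (ha : a ∈ Set.Icc (-1:ℝ) 1) (hb : b ∈ Set.Icc (-1:ℝ) 1) (hab : a < b)
    (hza : f₂ (a:ℂ) = 0) (hzb : f₂ (b:ℂ) = 0)
    (hconsec : ∀ x ∈ Set.Ioo a b, f₂ (x:ℂ) ≠ 0) :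
    ∃ (S : Finset ℝ) (m : ℝ → ℕ),
      (∀ x : ℝ, x ∈ S ↔ x ∈ Set.Ioo a b ∧ f₁ (x:ℂ) = 0) ∧
      (∀ x ∈ S, ∀ h : AnalyticAt ℂ f₁ (x:ℂ), analyticOrderAt f₁ (x:ℂ) = (m x : ℕ∞)) ∧
      Even (∑ x ∈ S, m x) := by
  classical
  have hmem : ∀ t : ℝ, t ∈ Set.Icc (-1:ℝ) 1 → (t:ℂ) ∈ closedBall (0:ℂ) 1 := by
    intro t ht
    simp only [Metric.mem_closedBall, Complex.dist_eq, sub_zero, Complex.norm_real, Real.norm_eq_abs]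
    rwa [abs_le]
  set F : ℝ → ℝ := fun t => (f₁ (t:ℂ)).re with hFdef
  have hreal : ∀ t : ℝ, t ∈ Set.Icc (-1:ℝ) 1 → f₁ (t:ℂ) = ((F t : ℝ) : ℂ) := by
    intro t ht
    have h := hf₁.2 (t:ℂ) (hmem t ht)
    rw [Complex.conj_ofReal] at h
    exact (Complex.conj_eq_iff_re.1 h.symm).symm
  have hab' : Set.Icc a b ⊆ Set.Icc (-1:ℝ) 1 := Set.Icc_subset_Icc ha.1 hb.2
  have hIoo : Set.Ioo a b ⊆ Set.Ioo (-1:ℝ) 1 := fun t ht =>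
    ⟨lt_of_le_of_lt ha.1 ht.1, lt_of_lt_of_le ht.2 hb.2⟩
  have hballmem : ∀ t : ℝ, t ∈ Set.Ioo a b → (t:ℂ) ∈ ball (0:ℂ) 1 := by
    intro t ht
    have h := hIoo ht
    simp only [Metric.mem_ball, Complex.dist_eq, sub_zero, Complex.norm_real, Real.norm_eq_abs]
    rw [abs_lt]; exact ⟨h.1, h.2⟩
  have hF1 : ∀ t : ℝ, t ∈ Set.Icc (-1:ℝ) 1 → f₂ (t:ℂ) = 0 → f₁ (t:ℂ) ≠ 0 := by
    intro t ht h2 h1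
    have h := hcorona (t:ℂ) (hmem t ht)
    rw [h1, h2] at h
    simp only [map_zero, norm_zero, add_zero] at h
    linarith
  have hF1a := hF1 a ha hza
  have hF1b := hF1 b hb hzb
  have hcont : ContinuousOn (fun t : ℝ => f₁ (t:ℂ)) (Set.Icc (-1:ℝ) 1) :=
    hf₁.1.1.comp Complex.continuous_ofReal.continuousOn hmem
  have hFcont : ContinuousOn F (Set.Icc (-1:ℝ) 1) := Complex.continuous_re.comp_continuousOn hcont
  have hA : AnalyticOnNhd ℂ f₁ (ball 0 1) := hf₁.1.2.analyticOnNhd isOpen_ball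
  have hEZ : ∀ z ∈ ball (0:ℂ) 1, ¬ (∀ᶠ w in 𝓝 z, f₁ w = 0) := by
    intro z hz hev
    have hzero : Set.EqOn f₁ 0 (ball 0 1) :=
      hA.eqOn_zero_of_preconnected_of_eventuallyEq_zero
        (convex_ball (0:ℂ) 1).isPreconnected hz hev
    have haC : (a:ℂ) ∈ closedBall (0:ℂ) 1 := hmem a ha
    haveI : (𝓝[ball (0:ℂ) 1] (a:ℂ)).NeBot := by
      apply mem_closure_iff_nhdsWithin_neBot.mp
      rw [closure_ball (0:ℂ) one_ne_zero]
      exact haC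
    have h1 : Filter.Tendsto f₁ (𝓝[ball (0:ℂ) 1] (a:ℂ)) (𝓝 (f₁ a)) :=
      (hf₁.1.1 (a:ℂ) haC).mono ball_subset_closedBall
    have h2 : Filter.Tendsto f₁ (𝓝[ball (0:ℂ) 1] (a:ℂ)) (𝓝 0) := by
      apply Filter.Tendsto.congr' _ tendsto_const_nhds
      exact eventually_mem_nhdsWithin.mono fun w hw => (hzero hw).symm
    exact hF1a (tendsto_nhds_unique h1 h2)
  -- Finiteness of the zero set of f₁ in (a,b)
  set Z : Set ℝ := {t | t ∈ Set.Ioo a b ∧ f₁ (t:ℂ) = 0} with hZdef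
  have hZsub : Z ⊆ Set.Icc a b := fun t ht => ⟨ht.1.1.le, ht.1.2.le⟩
  have hZfin : Z.Finite := by
    by_contra hinf
    have hinf' : Z.Infinite := hinf
    obtain ⟨x, hxI, hacc⟩ := hinf'.exists_accPt_of_subset_isCompact isCompact_Icc hZsub
    haveI hNB : (𝓝[Z \ {x}] x).NeBot := by
      rw [nhdsWithin]
      exact accPt_principal_iff_clusterPt.1 hacc
    have hevmem : ∀ᶠ t in 𝓝[Z \ {x}] x, t ∈ Z \ {x} := self_mem_nhdsWithin
    by_cases h0 : f₁ (x:ℂ) = 0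
    · have hxIoo : x ∈ Set.Ioo a b := by
        rcases eq_or_lt_of_le hxI.1 with h | h1
        · exact absurd h0 (h ▸ hF1a)
        rcases eq_or_lt_of_le hxI.2 with h | h2
        · exact absurd h0 (h ▸ hF1b)
        exact ⟨h1, h2⟩
      have hxan : AnalyticAt ℂ f₁ (x:ℂ) := hA _ (hballmem x hxIoo)
      rcases hxan.eventually_eq_zero_or_eventually_ne_zero with hev | hev
      · exact hEZ _ (hballmem x hxIoo) hev
      · have hmapsto : Set.MapsTo (fun t : ℝ => (t:ℂ)) {x}ᶜ {(x:ℂ)}ᶜ := fun t ht h =>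
          ht (Complex.ofReal_injective h)
        have htend : Filter.Tendsto (fun t : ℝ => (t:ℂ)) (𝓝[≠] x) (𝓝[≠] (x:ℂ)) :=
          Complex.continuous_ofReal.continuousWithinAt.tendsto_nhdsWithin hmapsto
        have hev' := htend.eventually hev
        have hle : 𝓝[Z \ {x}] x ≤ 𝓝[≠] x :=
          nhdsWithin_mono x (fun t ht => ht.2)
        obtain ⟨t, h1, h2⟩ := ((Filter.Eventually.filter_mono hle hev').and hevmem).exists
        exact h1 h2.1.2
    · have hcw : ContinuousWithinAt (fun t : ℝ => f₁ (t:ℂ)) (Set.Icc a b) x :=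
        (hcont.mono hab') x hxI
      have hev : ∀ᶠ (t : ℝ) in 𝓝[Set.Icc a b] x, f₁ (t:ℂ) ≠ 0 := by
        have hmem0 : ({(0:ℂ)}ᶜ : Set ℂ) ∈ 𝓝 (f₁ (x:ℂ)) :=
          isOpen_compl_singleton.mem_nhds h0
        exact hcw hmem0
      have hle : 𝓝[Z \ {x}] x ≤ 𝓝[Set.Icc a b] x :=
        nhdsWithin_mono x (fun t ht => hZsub ht.1)
      obtain ⟨t, h1, h2⟩ := ((Filter.Eventually.filter_mono hle hev).and hevmem).exists
      exact h1 h2.1.2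
  set S : Finset ℝ := hZfin.toFinset with hSdef
  have hSmem : ∀ t : ℝ, t ∈ S ↔ t ∈ Set.Ioo a b ∧ f₁ (t:ℂ) = 0 := fun t => hZfin.mem_toFinset
  set m : ℝ → ℕ := fun t => if h : AnalyticAt ℂ f₁ (t:ℂ) then (analyticOrderAt f₁ (t:ℂ)).toNat else 0 with hmdef
  have horder_ne_top : ∀ t : ℝ, t ∈ Set.Ioo a b → ∀ h : AnalyticAt ℂ f₁ (t:ℂ), analyticOrderAt f₁ (t:ℂ) ≠ ⊤ := by
    intro t ht h htop
    exact hEZ _ (hballmem t ht) (analyticOrderAt_eq_top.1 htop)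
  have hm : ∀ x ∈ S, ∀ h : AnalyticAt ℂ f₁ (x:ℂ), analyticOrderAt f₁ (x:ℂ) = (m x : ℕ∞) := by
    intro x hx h
    have hxIoo := ((hSmem x).1 hx).1
    simp only [hmdef]
    rw [dif_pos h]
    exact (ENat.coe_toNat (horder_ne_top x hxIoo h)).symm
  refine ⟨S, m, hSmem, hm, ?_⟩
  -- the parity argument
  have hzeros : ∀ x ∈ Set.Icc a b, F x = 0 → x ∈ S := by
    intro t ht h0
    have h0' : f₁ (t:ℂ) = 0 := by rw [hreal t (hab' ht), h0, Complex.ofReal_zero]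
    rcases eq_or_lt_of_le ht.1 with h | h1
    · exact absurd h0' (h ▸ hF1a)
    rcases eq_or_lt_of_le ht.2 with h | h2
    · exact absurd h0' (h ▸ hF1b)
    exact (hSmem t).2 ⟨⟨h1, h2⟩, h0'⟩
  have hfact : ∀ x ∈ S, ∃ ε > 0, ∃ g : ℝ → ℝ, ContinuousOn g (Set.Ioo (x-ε) (x+ε)) ∧
      ∀ t ∈ Set.Ioo (x-ε) (x+ε), g t ≠ 0 ∧ F t = (t - x)^(m x) * g t := by
    intro x hx
    obtain ⟨hxIoo, hx0⟩ := (hSmem x).1 hx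
    have h : AnalyticAt ℂ f₁ (x:ℂ) := hA _ (hballmem x hxIoo)
    have hord : analyticOrderAt f₁ (x:ℂ) = (m x : ℕ∞) := hm x hx h
    obtain ⟨g, hgan, hgx, hev⟩ := h.analyticOrderAt_eq_natCast.1 hord
    have hev2 : ∀ᶠ z in 𝓝 (x:ℂ), f₁ z = (z - x)^(m x) * g z ∧ g z ≠ 0 ∧ AnalyticAt ℂ g z := by
      filter_upwards [hev, hgan.continuousAt.eventually_ne hgx, hgan.eventually_analyticAt]
        with z h1 h2 h3
      exact ⟨by rw [h1, smul_eq_mul], h2, h3⟩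
    obtain ⟨ε₀, hε₀, hball⟩ := Metric.eventually_nhds_iff.1 hev2
    set ε := min ε₀ (min (x - a) (b - x)) with hεdef
    have hεpos : 0 < ε := lt_min hε₀ (lt_min (by linarith [hxIoo.1]) (by linarith [hxIoo.2]))
    have hdist : ∀ t : ℝ, t ∈ Set.Ioo (x - ε) (x + ε) → dist (t:ℂ) (x:ℂ) < ε₀ := by
      intro t ht
      rw [Complex.dist_eq, ← Complex.ofReal_sub, Complex.norm_real, Real.norm_eq_abs]
      have h5 : |t - x| < ε := abs_lt.2 ⟨by linarith [ht.1], by linarith [ht.2]⟩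
      exact lt_of_lt_of_le h5 (min_le_left _ _)
    have hIccsub : Set.Ioo (x - ε) (x + ε) ⊆ Set.Icc (-1:ℝ) 1 := by
      intro t ht
      have hεa : ε ≤ x - a := le_trans (min_le_right _ _) (min_le_left _ _)
      have hεb : ε ≤ b - x := le_trans (min_le_right _ _) (min_le_right _ _)
      exact ⟨by linarith [ht.1, ha.1], by linarith [ht.2, hb.2]⟩
    have hcastsub : ∀ t : ℝ, ((t:ℂ) - (x:ℂ)) = ((t - x : ℝ) : ℂ) := by
      intro t; push_cast; ring
    have hgreal' : ∀ t : ℝ, t ∈ Set.Ioo (x - ε) (x + ε) → t ≠ x →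
        g (t:ℂ) = (((g (t:ℂ)).re : ℝ) : ℂ) := by
      intro t ht htx
      obtain ⟨heq, hgne, -⟩ := hball (hdist t ht)
      have htx0 : ((t - x : ℝ) : ℂ) ≠ 0 := Complex.ofReal_ne_zero.2 (sub_ne_zero.2 htx)
      have h2 : ((t - x :ℝ) : ℂ)^(m x) ≠ 0 := pow_ne_zero _ htx0
      have h3 : ((t - x : ℝ) : ℂ)^(m x) * g (t:ℂ) = ((F t : ℝ):ℂ) := by
        rw [← hcastsub t]
        exact heq.symm.trans (hreal t (hIccsub ht))
      have hg_eq : g (t:ℂ) = ((F t / (t - x)^(m x) : ℝ) : ℂ) := by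
        rw [Complex.ofReal_div, Complex.ofReal_pow, eq_div_iff h2, mul_comm]
        exact h3
      rw [hg_eq, Complex.ofReal_re]
    have hgx_real : g ((x:ℝ):ℂ) = (((g ((x:ℝ):ℂ)).re : ℝ) : ℂ) := by
      have h1 : Filter.Tendsto (fun s : ℝ => (g ((s:ℝ):ℂ)).im) (𝓝[≠] x)
          (𝓝 ((g ((x:ℝ):ℂ)).im)) := by
        apply Filter.Tendsto.mono_left _ nhdsWithin_le_nhds
        exact (Complex.continuous_im.continuousAt.comp
          (hgan.continuousAt.comp Complex.continuous_ofReal.continuousAt)).tendsto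
      have h2 : ∀ᶠ s in 𝓝[≠] x, (g ((s:ℝ):ℂ)).im = 0 := by
        have hIoomem : Set.Ioo (x - ε) (x + ε) ∈ 𝓝 x :=
          Ioo_mem_nhds (by linarith) (by linarith)
        filter_upwards [nhdsWithin_le_nhds hIoomem, self_mem_nhdsWithin] with s hs hsne
        rw [hgreal' s hs (Set.mem_compl_singleton_iff.1 hsne)]
        simp
      have h3 : Filter.Tendsto (fun s : ℝ => (g ((s:ℝ):ℂ)).im) (𝓝[≠] x) (𝓝 0) :=
        Filter.Tendsto.congr' (h2.mono fun s hs => hs.symm) tendsto_const_nhds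
      have him : (g ((x:ℝ):ℂ)).im = 0 := tendsto_nhds_unique h1 h3
      exact Complex.ext (by simp) (by simp [him])
    have hgreal : ∀ t : ℝ, t ∈ Set.Ioo (x - ε) (x + ε) →
        g (t:ℂ) = (((g (t:ℂ)).re : ℝ) : ℂ) := by
      intro t ht
      by_cases htx : t = x
      · rw [htx]; exact hgx_real
      · exact hgreal' t ht htx
    refine ⟨ε, hεpos, fun t => (g (t:ℂ)).re, ?_, ?_⟩
    · intro t ht
      have h3 : AnalyticAt ℂ g (t:ℂ) := (hball (hdist t ht)).2.2
      exact (Complex.continuous_re.continuousAt.comp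
        (h3.continuousAt.comp Complex.continuous_ofReal.continuousAt)).continuousWithinAt
    · intro t ht
      obtain ⟨heq, hgne, -⟩ := hball (hdist t ht)
      constructor
      · intro h0
        have h0' : (g (t:ℂ)).re = 0 := h0
        exact hgne (by rw [hgreal t ht, h0', Complex.ofReal_zero])
      · show (f₁ (t:ℂ)).re = (t - x)^(m x) * (g (t:ℂ)).re
        rw [heq, hcastsub t, ← Complex.ofReal_pow, Complex.re_ofReal_mul]
  have hkey := parity_lemma S F m a b hab (hFcont.mono hab') hzeros
    (fun x hx => ((hSmem x).1 hx).1) hfact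
  have hFab : 0 < F a * F b := hPOZ a ha b hb hza hzb
  rcases Nat.even_or_odd (∑ x ∈ S, m x) with he | ho
  · exact he
  · exfalso
    rw [ho.neg_one_pow] at hkey
    nlinarith
end

section
/- Let f in A_R(D) with ||f||_inf <= 1 and let Omega be an open connected subset of the closed unit disc, symmetric with respect to the real axis (Omega = conj(Omega)), on which f has no zeros, such that f is positive at some (equivalently, every accessible) real point of Omega. Then there exists a continuous branch L of log f on Omega satisfying the symmetry L(z) = conj(L(conj(z)))—in particular L is real on Omega intersect R. -/
open Complex Metric Set

lemma aux_slit {z : ℂ} (h : ‖z - 1‖ < 1) : z ∈ Complex.slitPlane := by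
  left
  have h1 := Complex.abs_re_le_norm (z - 1)
  simp only [Complex.sub_re, Complex.one_re] at h1
  have := abs_le.mp h1
  linarith [this.1]

lemma aux_int_const {X : Type*} [TopologicalSpace X] {s : Set X} (hs : IsPreconnected s)
    {φ : X → ℝ} (hφ : ContinuousOn φ s) (hint : ∀ x ∈ s, ∃ n : ℤ, φ x = n)
    {x y : X} (hx : x ∈ s) (hy : y ∈ s) : φ x = φ y := by
  by_contra hne
  wlog hlt : φ x < φ y generalizing x y
  · exact this hy hx (Ne.symm hne) (lt_of_le_of_ne (not_lt.mp hlt) (Ne.symm hne))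
  have himg : IsPreconnected (φ '' s) := hs.image φ hφ
  obtain ⟨n, hn⟩ := hint x hx
  obtain ⟨m, hm⟩ := hint y hy
  have hnm : (n : ℝ) < m := by rw [← hn, ← hm]; exact hlt
  have hnm' : n < m := by exact_mod_cast hnm
  have hmem : ((n : ℝ) + 1/2) ∈ φ '' s := by
    apply himg.Icc_subset ⟨x, hx, hn⟩ ⟨y, hy, hm⟩
    constructor
    · linarith
    · have : (n : ℝ) + 1 ≤ m := by exact_mod_cast hnm'
      linarith
  obtain ⟨z, hz, hφz⟩ := hmem
  obtain ⟨k, hk⟩ := hint z hz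
  rw [hk] at hφz
  have : (2 * k : ℝ) = 2 * n + 1 := by push_cast; linarith
  have : (2 * k : ℤ) = 2 * n + 1 := by exact_mod_cast this
  omega

lemma aux_sub_const {X : Type*} [TopologicalSpace X] {s : Set X} (hs : IsPreconnected s)
    {u v : X → ℂ} (hu : ContinuousOn u s) (hv : ContinuousOn v s)
    (h : ∀ x ∈ s, Complex.exp (u x) = Complex.exp (v x))
    {x₀ : X} (hx₀ : x₀ ∈ s) (h₀ : u x₀ = v x₀) : ∀ x ∈ s, u x = v x := by
  have hint : ∀ x ∈ s, ∃ n : ℤ, u x - v x = n * (2 * Real.pi * Complex.I) := by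
    intro x hx
    have : Complex.exp (u x - v x) = 1 := by
      rw [Complex.exp_sub, h x hx, div_self (Complex.exp_ne_zero _)]
    exact Complex.exp_eq_one_iff.mp this
  set φ : X → ℝ := fun x => (u x - v x).im / (2 * Real.pi) with hφdef
  have hφcont : ContinuousOn φ s := (Complex.continuous_im.comp_continuousOn (hu.sub hv)).div_const _
  have hφint : ∀ x ∈ s, ∃ n : ℤ, φ x = n := by
    intro x hx
    obtain ⟨n, hn⟩ := hint x hx
    refine ⟨n, ?_⟩
    rw [hφdef]
    simp only [hn]
    rw [div_eq_iff (by positivity : (2 * Real.pi : ℝ) ≠ 0)]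
    simp [Complex.mul_im, Complex.mul_re]
  intro x hx
  obtain ⟨n, hn⟩ := hint x hx
  have hc : φ x = φ x₀ := aux_int_const hs hφcont hφint hx hx₀
  have h0 : φ x₀ = 0 := by rw [hφdef]; simp [h₀]
  have : φ x = (n : ℝ) := by
    rw [hφdef]; simp only [hn]
    rw [div_eq_iff (by positivity : (2 * Real.pi : ℝ) ≠ 0)]
    simp [Complex.mul_im, Complex.mul_re]
  have hn0 : (n : ℝ) = 0 := by rw [← this, hc, h0]
  have : n = 0 := by exact_mod_cast hn0
  rw [this] at hn
  simpa [sub_eq_zero] using hn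

lemma aux_liftA (g : ℝ → ℂ) (hg : Continuous g) (n : ℕ)
    (hosc : ∀ s ∈ Icc (0:ℝ) 1, ∀ t ∈ Icc (0:ℝ) 1, |t - s| ≤ 1/n →
      ‖g t - g s‖ < ‖g s‖)
    (a : ℂ) (ha : Complex.exp a = g 0) :
    ∀ k : ℕ, k ≤ n → ∃ ℓ : ℝ → ℂ, Continuous ℓ ∧ ℓ 0 = a ∧
      ∀ t ∈ Icc (0:ℝ) ((k:ℝ)/n), Complex.exp (ℓ t) = g t := by
  intro k
  induction k with
  | zero =>
    intro _
    refine ⟨fun _ => a, continuous_const, rfl, ?_⟩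
    intro t ht
    simp only [Nat.cast_zero, zero_div] at ht
    have : t = 0 := le_antisymm ht.2 ht.1
    rw [this, ha]
  | succ k ih =>
    intro hk1
    obtain ⟨ℓ, hℓc, hℓ0, hℓe⟩ := ih (le_of_lt (Nat.lt_of_succ_le hk1))
    have hnpos : 0 < n := Nat.lt_of_lt_of_le (Nat.succ_pos k) hk1
    have hn : 0 < (n:ℝ) := by exact_mod_cast hnpos
    set c : ℝ := (k:ℝ)/n with hc
    set c' : ℝ := ((k+1:ℕ):ℝ)/n with hc'
    have hcc' : c ≤ c' := by
      exact (div_le_div_iff_of_pos_right hn).mpr (by exact_mod_cast Nat.le_succ k)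
    have hc0 : 0 ≤ c := div_nonneg (Nat.cast_nonneg k) hn.le
    have hc'1 : c' ≤ 1 := by
      rw [hc', div_le_one hn]
      exact_mod_cast hk1
    have hcI : c ∈ Icc (0:ℝ) 1 := ⟨hc0, hcc'.trans hc'1⟩
    have hdiff : c' - c = 1/n := by
      rw [hc', hc]
      push_cast
      ring
    set cl : ℝ → ℝ := fun t => max c (min c' t) with hcl
    have hclmem : ∀ t, cl t ∈ Icc c c' := fun t =>
      ⟨le_max_left _ _, max_le hcc' (min_le_left _ _)⟩
    have hclI : ∀ t, cl t ∈ Icc (0:ℝ) 1 :=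
      fun t => ⟨hc0.trans (hclmem t).1, (hclmem t).2.trans hc'1⟩
    have hclnear : ∀ t, |cl t - c| ≤ 1/n := by
      intro t
      rw [_root_.abs_of_nonneg (by linarith [(hclmem t).1])]
      linarith [(hclmem t).2, hdiff]
    have hgc : g c ≠ 0 := by
      intro h0
      have := hosc c hcI c hcI (by rw [sub_self, abs_zero]; positivity)
      simp [h0] at this
    have hIccn : ∀ t ∈ Icc (0:ℝ) 1, g t ≠ 0 := by
      intro t ht h0
      have := hosc t ht t ht (by rw [sub_self, abs_zero]; positivity)
      simp [h0] at this
    set q : ℝ → ℂ := fun t => g (cl t) / g c with hq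
    have habs : ∀ t, ‖q t - 1‖ < 1 := by
      intro t
      have h1 : q t - 1 = (g (cl t) - g c) / g c := by
        rw [hq]; field_simp
      rw [h1, norm_div, div_lt_one (norm_pos_iff.mpr hgc)]
      exact hosc c hcI (cl t) (hclI t) (hclnear t)
    have hqslit : ∀ t, q t ∈ Complex.slitPlane := fun t => aux_slit (habs t)
    have hqne : ∀ t, q t ≠ 0 := by
      intro t h0
      have := habs t
      rw [h0] at this
      simp at this
    have hqcont : Continuous q := by
      apply Continuous.div_const
      exact hg.comp ((continuous_const.max (continuous_const.min continuous_id)))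
    have hlogq : Continuous fun t => Complex.log (q t) := by
      rw [continuous_iff_continuousAt]
      intro t
      exact (continuousAt_clog (hqslit t)).comp hqcont.continuousAt
    have hqc : q c = 1 := by
      have hclc : cl c = c := by
        rw [hcl]
        simp only [min_eq_right hcc', max_self]
      rw [hq]
      simp only [hclc]
      exact div_self hgc
    refine ⟨fun t => if t ≤ c then ℓ t else ℓ c + Complex.log (q t), ?_, ?_, ?_⟩
    · exact Continuous.if_le hℓc (continuous_const.add hlogq) continuous_id continuous_const
        (fun t ht => by rw [ht, hqc, Complex.log_one, add_zero])
    · show (if (0:ℝ) ≤ c then ℓ 0 else ℓ c + Complex.log (q 0)) = a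
      rw [if_pos hc0, hℓ0]
    · intro t ht
      show Complex.exp (if t ≤ c then ℓ t else ℓ c + Complex.log (q t)) = g t
      by_cases htc : t ≤ c
      · rw [if_pos htc]
        exact hℓe t ⟨ht.1, htc⟩
      · rw [if_neg htc]
        push_neg at htc
        have hclt : cl t = t := by
          show c ⊔ c' ⊓ t = t
          rw [min_eq_right ht.2, max_eq_right htc.le]
        have hqt : q t = g t / g c := by
          show g (cl t) / g c = g t / g c
          rw [hclt]
        rw [Complex.exp_add, Complex.exp_log (hqne t), hℓe c ⟨hc0, le_rfl⟩, hqt]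
        field_simp

lemma aux_div_close {u v : ℂ} (hv : v ≠ 0) (h : ‖u - v‖ < ‖v‖) :
    ‖u / v - 1‖ < 1 := by
  have h1 : u / v - 1 = (u - v) / v := by field_simp
  rw [h1, norm_div, div_lt_one (norm_pos_iff.mpr hv)]
  exact h

lemma aux_ne_of_close {z : ℂ} (h : ‖z - 1‖ < 1) : z ≠ 0 := by
  intro h0
  rw [h0] at h
  simp at h

section PathLift

variable {X : Type*} [TopologicalSpace X] {F : X → ℂ}

/-- `ℓ` is a continuous logarithm of `F` along the path `γ`. -/
def AuxPLift (F : X → ℂ) {a b : X} (γ : Path a b) (ℓ : ℝ → ℂ) : Prop :=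
  Continuous ℓ ∧ ∀ t ∈ Icc (0:ℝ) 1, Complex.exp (ℓ t) = F (γ.extend t)

lemma aux_plift_exists (hF : Continuous F) (hFne : ∀ x, F x ≠ 0) {a b : X} (γ : Path a b)
    {w : ℂ} (hw : Complex.exp w = F a) : ∃ ℓ, AuxPLift F γ ℓ ∧ ℓ 0 = w := by
  set g : ℝ → ℂ := fun t => F (γ.extend t) with hgdef
  have hg : Continuous g := hF.comp γ.continuous_extend
  obtain ⟨t₀, ht₀, hmin⟩ := isCompact_Icc.exists_isMinOn (Set.nonempty_Icc.mpr zero_le_one)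
    ((continuous_norm.comp hg).continuousOn (s := Icc (0:ℝ) 1))
  have hm : 0 < ‖g t₀‖ := norm_pos_iff.mpr (hFne _)
  have huc := isCompact_Icc.uniformContinuousOn_of_continuous
    (hg.continuousOn (s := Icc (0:ℝ) 1))
  obtain ⟨δ, hδ, hd⟩ := (Metric.uniformContinuousOn_iff.mp huc) _ hm
  obtain ⟨n, hn⟩ := exists_nat_one_div_lt hδ
  have hosc : ∀ s ∈ Icc (0:ℝ) 1, ∀ t ∈ Icc (0:ℝ) 1, |t - s| ≤ 1/((n+1:ℕ):ℝ) →
      ‖g t - g s‖ < ‖g s‖ := by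
    intro s hs t ht hts
    have h1 : dist t s < δ := by
      rw [Real.dist_eq]
      calc |t - s| ≤ 1/((n+1:ℕ):ℝ) := hts
        _ < δ := by push_cast; push_cast at hn; linarith
    have h2 : dist (g t) (g s) < ‖g t₀‖ := hd t ht s hs h1
    have h3 : ‖g t₀‖ ≤ ‖g s‖ := hmin hs
    rw [Complex.dist_eq] at h2
    linarith
  have ha : Complex.exp w = g 0 := by rw [hgdef]; simp [Path.extend_zero, hw]
  obtain ⟨ℓ, hℓc, hℓ0, hℓe⟩ := aux_liftA g hg (n+1) hosc w ha (n+1) le_rfl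
  refine ⟨ℓ, ⟨hℓc, ?_⟩, hℓ0⟩
  intro t ht
  apply hℓe
  rwa [div_self (by exact_mod_cast Nat.succ_ne_zero n : ((n+1:ℕ):ℝ) ≠ 0)]

lemma aux_plift_end_unique {a b : X} {γ : Path a b} {ℓ₁ ℓ₂ : ℝ → ℂ}
    (h₁ : AuxPLift F γ ℓ₁) (h₂ : AuxPLift F γ ℓ₂) (h0 : ℓ₁ 0 = ℓ₂ 0) : ℓ₁ 1 = ℓ₂ 1 :=
  aux_sub_const isPreconnected_Icc h₁.1.continuousOn h₂.1.continuousOn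
    (fun t ht => by rw [h₁.2 t ht, h₂.2 t ht]) (x₀ := 0) ⟨le_rfl, zero_le_one⟩ h0
    1 ⟨zero_le_one, le_rfl⟩

lemma aux_extend_clamp {a b : X} (γ : Path a b) (t : ℝ) :
    γ.extend t = γ.extend ↑(Set.projIcc (0:ℝ) 1 zero_le_one t) := by
  rw [Path.extend_extends' γ (Set.projIcc (0:ℝ) 1 zero_le_one t)]
  rfl

lemma aux_close_end (hFne : ∀ x, F x ≠ 0) {a b : X} {γ₀ γ₁ : Path a b}
    (hcl : ∀ t ∈ Icc (0:ℝ) 1,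
      ‖F (γ₁.extend t) - F (γ₀.extend t)‖ < ‖F (γ₀.extend t)‖)
    {ℓ₀ ℓ₁ : ℝ → ℂ} (hF : Continuous F)
    (h₀ : AuxPLift F γ₀ ℓ₀) (h₁ : AuxPLift F γ₁ ℓ₁) (h00 : ℓ₁ 0 = ℓ₀ 0) : ℓ₁ 1 = ℓ₀ 1 := by
  set r : ℝ → ℂ := fun t => F (γ₁.extend t) / F (γ₀.extend t) with hrdef
  have hall : ∀ t, ‖r t - 1‖ < 1 := by
    intro t
    have e0 := aux_extend_clamp γ₀ t
    have e1 := aux_extend_clamp γ₁ t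
    rw [hrdef]
    simp only [e0, e1]
    exact aux_div_close (hFne _) (hcl _ (Set.projIcc (0:ℝ) 1 zero_le_one t).2)
  have hrc : Continuous r :=
    (hF.comp γ₁.continuous_extend).div (hF.comp γ₀.continuous_extend) (fun t => hFne _)
  have hlogr : Continuous fun t => Complex.log (r t) := by
    rw [continuous_iff_continuousAt]
    intro t
    exact (continuousAt_clog (aux_slit (hall t))).comp hrc.continuousAt
  have h₁' : AuxPLift F γ₁ (fun t => ℓ₀ t + Complex.log (r t)) := by
    refine ⟨h₀.1.add hlogr, ?_⟩
    intro t ht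
    rw [Complex.exp_add, Complex.exp_log (aux_ne_of_close (hall t)), h₀.2 t ht, hrdef]
    show F (γ₀.extend t) * (F (γ₁.extend t) / F (γ₀.extend t)) = F (γ₁.extend t)
    rw [mul_comm]
    exact div_mul_cancel₀ _ (hFne _)
  have hstart : ℓ₁ 0 = ℓ₀ 0 + Complex.log (r 0) := by
    have : r 0 = 1 := by
      rw [hrdef]
      simp only [Path.extend_zero]
      exact div_self (hFne _)
    rw [this, Complex.log_one, add_zero, h00]
  have := aux_plift_end_unique h₁ h₁' hstart
  rw [this]
  have : r 1 = 1 := by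
    rw [hrdef]
    simp only [Path.extend_one]
    exact div_self (hFne _)
  rw [this, Complex.log_one, add_zero]

lemma aux_trans_lift {a b c : X} {γ : Path a b} {σ : Path b c} {ℓ m : ℝ → ℂ}
    (hγ : AuxPLift F γ ℓ) (hσ : AuxPLift F σ m) (hm0 : m 0 = ℓ 1) :
    AuxPLift F (γ.trans σ) (fun t => if t ≤ 1/2 then ℓ (2*t) else m (2*t - 1)) := by
  constructor
  · apply Continuous.if_le
    · exact hγ.1.comp (continuous_const.mul continuous_id)
    · exact hσ.1.comp ((continuous_const.mul continuous_id).sub continuous_const)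
    · exact continuous_id
    · exact continuous_const
    · intro t ht
      rw [ht]
      norm_num [hm0]
  · intro t ht
    show Complex.exp (if t ≤ 1/2 then ℓ (2*t) else m (2*t - 1)) = F ((γ.trans σ).extend t)
    rw [Path.extend_apply _ ht, Path.trans_apply]
    by_cases h : t ≤ 1/2
    · rw [if_pos h]
      simp only [h, dif_pos]
      rw [hγ.2 (2*t) ⟨by linarith [ht.1], by linarith⟩,
        Path.extend_apply _ ⟨by linarith [ht.1], by linarith⟩]
    · rw [if_neg h]
      push_neg at h
      simp only [h.not_ge, dif_neg, not_false_iff]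
      rw [hσ.2 (2*t - 1) ⟨by linarith, by linarith [ht.2]⟩,
        Path.extend_apply _ ⟨by linarith, by linarith [ht.2]⟩]

lemma aux_homotopic_end (hF : Continuous F) (hFne : ∀ x, F x ≠ 0) {a b : X}
    {γ₀ γ₁ : Path a b} (hhom : Path.Homotopic γ₀ γ₁) {ℓ₀ ℓ₁ : ℝ → ℂ}
    (h₀ : AuxPLift F γ₀ ℓ₀) (h₁ : AuxPLift F γ₁ ℓ₁) (h00 : ℓ₀ 0 = ℓ₁ 0) : ℓ₀ 1 = ℓ₁ 1 := by
  obtain ⟨H⟩ := hhom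
  set G : unitInterval × unitInterval → ℂ := fun p => F (H p) with hGdef
  have hGc : Continuous G := hF.comp H.continuous
  obtain ⟨p₀, -, hmin⟩ := isCompact_univ.exists_isMinOn univ_nonempty
    ((continuous_norm.comp hGc).continuousOn)
  have hm : 0 < ‖G p₀‖ := norm_pos_iff.mpr (hFne _)
  have huc : UniformContinuous G := CompactSpace.uniformContinuous_of_continuous hGc
  obtain ⟨δ, hδ, hd⟩ := Metric.uniformContinuous_iff.mp huc _ hm
  have heval : ∀ (s : unitInterval) (t : unitInterval), (H.eval s) t = H (s, t) := by
    intro s t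
    rfl
  have hw0 : Complex.exp (ℓ₀ 0) = F a := by
    have := h₀.2 0 ⟨le_rfl, zero_le_one⟩
    rwa [Path.extend_zero] at this
  have hes : ∀ s : unitInterval, ∃ ℓ, AuxPLift F (H.eval s) ℓ ∧ ℓ 0 = ℓ₀ 0 :=
    fun s => aux_plift_exists hF hFne (H.eval s) hw0
  set e : unitInterval → ℂ := fun s => (hes s).choose 1 with hedef
  have hloc : ∀ s s' : unitInterval, dist s' s < δ → e s' = e s := by
    intro s s' hss
    have hcl : ∀ t ∈ Icc (0:ℝ) 1,
        ‖F ((H.eval s').extend t) - F ((H.eval s).extend t)‖ <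
          ‖F ((H.eval s).extend t)‖ := by
      intro t ht
      rw [Path.extend_apply _ ht, Path.extend_apply _ ht, heval, heval]
      have hdist : dist ((s', (⟨t, ht⟩ : unitInterval)) : unitInterval × unitInterval)
          (s, ⟨t, ht⟩) < δ := by
        rw [Prod.dist_eq]
        exact max_lt hss (by simpa [dist_self] using hδ)
      have h2 := hd hdist
      have h3 : ‖G p₀‖ ≤ ‖G (s, ⟨t, ht⟩)‖ := hmin (mem_univ _)
      rw [Complex.dist_eq] at h2
      show ‖G (s', ⟨t, ht⟩) - G (s, ⟨t, ht⟩)‖ < ‖G (s, ⟨t, ht⟩)‖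
      linarith
    exact aux_close_end hFne hcl hF (hes s).choose_spec.1 (hes s').choose_spec.1
      ((hes s').choose_spec.2.trans (hes s).choose_spec.2.symm)
  haveI : ConnectedSpace unitInterval :=
    Subtype.connectedSpace ⟨⟨0, by constructor <;> norm_num⟩, isPreconnected_Icc⟩
  have hA : {s : unitInterval | e s = e 0} = univ := by
    have hclopen : IsClopen {s : unitInterval | e s = e 0} := by
      constructor
      · rw [← isOpen_compl_iff]
        rw [Metric.isOpen_iff]
        intro s hs
        exact ⟨δ, hδ, fun s' hs' => by
          simp only [mem_compl_iff, mem_setOf_eq] at hs ⊢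
          rw [hloc s s' (mem_ball.mp hs')]
          exact hs⟩
      · rw [Metric.isOpen_iff]
        intro s hs
        exact ⟨δ, hδ, fun s' hs' => by
          simp only [mem_setOf_eq] at hs ⊢
          rw [hloc s s' (mem_ball.mp hs'), hs]⟩
    rcases isClopen_iff.mp hclopen with h | h
    · exfalso
      rw [eq_empty_iff_forall_notMem] at h
      exact h 0 rfl
    · exact h
  have he1 : e 1 = e 0 := by
    have : (1 : unitInterval) ∈ {s : unitInterval | e s = e 0} := hA ▸ mem_univ _
    exact this
  have h0end : ℓ₀ 1 = e 0 := by
    have hP := (hes 0).choose_spec.1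
    have hgood : AuxPLift F γ₀ ((hes 0).choose) :=
      ⟨hP.1, fun t ht => by
        have he : γ₀.extend t = (H.eval 0).extend t := by rw [H.eval_zero]
        rw [he]; exact hP.2 t ht⟩
    exact aux_plift_end_unique h₀ hgood ((hes 0).choose_spec.2).symm
  have h1end : e 1 = ℓ₁ 1 := by
    have hP := (hes 1).choose_spec.1
    have hgood : AuxPLift F γ₁ ((hes 1).choose) :=
      ⟨hP.1, fun t ht => by
        have he : γ₁.extend t = (H.eval 1).extend t := by rw [H.eval_one]
        rw [he]; exact hP.2 t ht⟩
    exact aux_plift_end_unique hgood h₁ (((hes 1).choose_spec.2).trans h00)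
  rw [h0end, ← he1, h1end]

end PathLift

theorem symmetric_log_branch (f : ℂ → ℂ) (Ω : Set ℂ)
    (hf : IsRealDiscAlg f) (hbd : ∀ z ∈ closedBall (0:ℂ) 1, ‖f z‖ ≤ 1)
    (hΩopen : IsOpen Ω) (hΩconn : IsConnected Ω) (hΩsub : Ω ⊆ closedBall 0 1)
    (hΩsymm : (starRingEnd ℂ) '' Ω = Ω)
    (hΩsc : SimplyConnectedSpace Ω)
    (hnz : ∀ z ∈ Ω, f z ≠ 0)
    (hpos : ∃ x : ℝ, (x:ℂ) ∈ Ω ∧ 0 < (f (x:ℂ)).re) :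
    ∃ L : ℂ → ℂ, ContinuousOn L Ω ∧
      (∀ z ∈ Ω, Complex.exp (L z) = f z) ∧
      (∀ z ∈ Ω, L z = (starRingEnd ℂ) (L ((starRingEnd ℂ) z))) ∧
      (∀ x : ℝ, (x:ℂ) ∈ Ω → (L (x:ℂ)).im = 0) := by
  classical
  obtain ⟨x₀, hx₀Ω, hx₀pos⟩ := hpos
  haveI := hΩsc
  have hfΩ : ContinuousOn f Ω := hf.1.1.mono hΩsub
  set F : Ω → ℂ := fun z => f ↑z with hFdef
  have hFc : Continuous F := hfΩ.restrict
  have hFne : ∀ x : Ω, F x ≠ 0 := fun x => hnz ↑x x.2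
  set z₀ : Ω := ⟨(x₀:ℂ), hx₀Ω⟩ with hz₀def
  -- f is real and positive at x₀
  have hconj : f ↑x₀ = (starRingEnd ℂ) (f ↑x₀) := by
    have := hf.2 ↑x₀ (hΩsub hx₀Ω)
    rwa [Complex.conj_ofReal] at this
  have him : (f ↑x₀).im = 0 := Complex.conj_eq_iff_im.mp hconj.symm
  set c : ℝ := (f ↑x₀).re with hcdef
  have hc : f ↑x₀ = (c : ℂ) := Complex.ext rfl (by simp [him])
  set w₀ : ℂ := ((Real.log c : ℝ) : ℂ) with hw₀def
  have hw₀ : Complex.exp w₀ = F z₀ := by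
    rw [hw₀def, ← Complex.ofReal_exp, Real.exp_log hx₀pos]
    exact hc.symm
  -- the branch, via lifting along paths
  have hLf : ∀ z : Ω, ∃ ℓ, AuxPLift F (PathConnectedSpace.somePath z₀ z) ℓ ∧ ℓ 0 = w₀ :=
    fun z => aux_plift_exists hFc hFne _ hw₀
  set Lfun : Ω → ℂ := fun z => (hLf z).choose 1 with hLfundef
  have hW : ∀ (z : Ω) (γ : Path z₀ z) (ℓ : ℝ → ℂ),
      AuxPLift F γ ℓ → ℓ 0 = w₀ → ℓ 1 = Lfun z := by
    intro z γ ℓ hℓ h0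
    exact aux_homotopic_end hFc hFne
      (SimplyConnectedSpace.paths_homotopic γ (PathConnectedSpace.somePath z₀ z))
      hℓ (hLf z).choose_spec.1 (h0.trans (hLf z).choose_spec.2.symm)
  set L : ℂ → ℂ := fun z => if h : z ∈ Ω then Lfun ⟨z, h⟩ else 0 with hLdef
  have hLΩ : ∀ z (h : z ∈ Ω), L z = Lfun ⟨z, h⟩ := fun z h => dif_pos h
  have hexp : ∀ z ∈ Ω, Complex.exp (L z) = f z := by
    intro z hz
    rw [hLΩ z hz, hLfundef]
    have := (hLf ⟨z, hz⟩).choose_spec.1.2 1 ⟨zero_le_one, le_rfl⟩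
    rwa [Path.extend_one] at this
  -- local formula and continuity
  have hloc : ∀ z₁ (h₁ : z₁ ∈ Ω), ∃ r > 0, ball z₁ r ⊆ Ω ∧
      ∀ z ∈ ball z₁ r, L z = L z₁ + Complex.log (f z / f z₁) := by
    intro z₁ h₁
    have hfz₁ : f z₁ ≠ 0 := hnz z₁ h₁
    have hat : ContinuousAt f z₁ := hfΩ.continuousAt (hΩopen.mem_nhds h₁)
    obtain ⟨δ, hδ, hδf⟩ := Metric.continuousAt_iff.mp hat _ (norm_pos_iff.mpr hfz₁)
    obtain ⟨r₁, hr₁, hr₁sub⟩ := Metric.isOpen_iff.mp hΩopen z₁ h₁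
    refine ⟨min δ r₁, lt_min hδ hr₁, (ball_subset_ball (min_le_right _ _)).trans hr₁sub, ?_⟩
    intro z hzball
    have hzΩ : z ∈ Ω := hr₁sub (ball_subset_ball (min_le_right _ _) hzball)
    -- a path in the ball from z₁ to z
    have hpc : IsPathConnected (ball z₁ (min δ r₁)) :=
      (convex_ball z₁ (min δ r₁)).isPathConnected ⟨z₁, mem_ball_self (lt_min hδ hr₁)⟩
    have hJ : JoinedIn (ball z₁ (min δ r₁)) z₁ z :=
      hpc.joinedIn z₁ (mem_ball_self (lt_min hδ hr₁)) z hzball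
    set σb : Path z₁ z := hJ.somePath with hσbdef
    have hσbmem : ∀ t, σb t ∈ ball z₁ (min δ r₁) := hJ.somePath_mem
    set σ : Path (⟨z₁, h₁⟩ : Ω) ⟨z, hzΩ⟩ :=
      { toFun := fun t => ⟨σb t, hr₁sub (ball_subset_ball (min_le_right _ _) (hσbmem t))⟩
        continuous_toFun := σb.continuous.subtype_mk _
        source' := Subtype.ext σb.source
        target' := Subtype.ext σb.target } with hσdef
    have hσball : ∀ t : ℝ, (↑(σ.extend t) : ℂ) ∈ ball z₁ δ := by
      intro t
      rw [aux_extend_clamp σ t, Path.extend_extends']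
      exact ball_subset_ball (min_le_left _ _) (hσbmem _)
    set ρ : ℝ → ℂ := fun t => f ↑(σ.extend t) / f z₁ with hρdef
    have hρclose : ∀ t, ‖ρ t - 1‖ < 1 := by
      intro t
      apply aux_div_close hfz₁
      have := hδf (mem_ball.mp (hσball t))
      rwa [Complex.dist_eq] at this
    have hρcont : Continuous ρ := ((hFc.comp σ.continuous_extend).div_const _)
    have hlogρ : Continuous fun t => Complex.log (ρ t) := by
      rw [continuous_iff_continuousAt]
      intro t
      exact (continuousAt_clog (aux_slit (hρclose t))).comp hρcont.continuousAt
    set mσ : ℝ → ℂ := fun t => L z₁ + Complex.log (ρ t) with hmσdef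
    have hmσ : AuxPLift F σ mσ := by
      refine ⟨continuous_const.add hlogρ, ?_⟩
      intro t ht
      rw [hmσdef]
      show Complex.exp (L z₁ + Complex.log (ρ t)) = F (σ.extend t)
      rw [Complex.exp_add, Complex.exp_log (aux_ne_of_close (hρclose t)), hexp z₁ h₁, hρdef]
      show f z₁ * (f ↑(σ.extend t) / f z₁) = F (σ.extend t)
      rw [mul_comm, div_mul_cancel₀ _ hfz₁]
    have hmσ0 : mσ 0 = L z₁ := by
      rw [hmσdef]
      show L z₁ + Complex.log (ρ 0) = L z₁
      have : ρ 0 = 1 := by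
        rw [hρdef]
        show f ↑(σ.extend 0) / f z₁ = 1
        rw [Path.extend_zero]
        exact div_self hfz₁
      rw [this, Complex.log_one, add_zero]
    have hmσ1 : mσ 1 = L z₁ + Complex.log (f z / f z₁) := by
      rw [hmσdef]
      show L z₁ + Complex.log (ρ 1) = _
      have : ρ 1 = f z / f z₁ := by
        rw [hρdef]
        show f ↑(σ.extend 1) / f z₁ = _
        rw [Path.extend_one]
      rw [this]
    set γ : Path z₀ ⟨z₁, h₁⟩ := PathConnectedSpace.somePath z₀ ⟨z₁, h₁⟩ with hγdef
    have hγspec := (hLf ⟨z₁, h₁⟩).choose_spec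
    set ℓγ : ℝ → ℂ := (hLf ⟨z₁, h₁⟩).choose with hℓγdef
    have hℓγ1 : ℓγ 1 = L z₁ := by rw [hLΩ z₁ h₁, hLfundef]
    have htrans := aux_trans_lift hγspec.1 hmσ (by rw [hmσ0, hℓγ1])
    have hend := hW ⟨z, hzΩ⟩ (γ.trans σ) _ htrans (by norm_num [hγspec.2])
    rw [← hLΩ z hzΩ] at hend
    rw [← hend]
    norm_num [hmσ1]
  have hcont : ContinuousOn L Ω := by
    intro z₁ h₁
    obtain ⟨r, hr, hsub, hform⟩ := hloc z₁ h₁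
    have hat : ContinuousAt f z₁ := hfΩ.continuousAt (hΩopen.mem_nhds h₁)
    have hquot : ContinuousAt (fun z => f z / f z₁) z₁ := hat.div_const _
    have h1 : (fun z => f z / f z₁) z₁ = 1 := div_self (hnz z₁ h₁)
    have h2 : ContinuousAt (fun z => L z₁ + Complex.log (f z / f z₁)) z₁ := by
      apply continuousAt_const.add
      apply (continuousAt_clog ?_).comp hquot
      show f z₁ / f z₁ ∈ Complex.slitPlane
      rw [div_self (hnz z₁ h₁)]
      exact Complex.one_mem_slitPlane
    have : ContinuousAt L z₁ :=
      h2.congr (Filter.eventuallyEq_of_mem (ball_mem_nhds z₁ hr)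
        (fun z hz => (hform z hz).symm))
    exact this.continuousWithinAt
  -- symmetry
  have hconjmem : ∀ z ∈ Ω, (starRingEnd ℂ) z ∈ Ω := by
    intro z hz
    rw [← hΩsymm] at hz
    obtain ⟨w, hw, hwz⟩ := hz
    rw [← hwz, Complex.conj_conj]
    exact hw
  set M : ℂ → ℂ := fun z => (starRingEnd ℂ) (L ((starRingEnd ℂ) z)) with hMdef
  have hMc : ContinuousOn M Ω :=
    Complex.continuous_conj.comp_continuousOn
      (hcont.comp Complex.continuous_conj.continuousOn hconjmem)
  have hMexp : ∀ z ∈ Ω, Complex.exp (M z) = f z := by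
    intro z hz
    rw [hMdef]
    show Complex.exp ((starRingEnd ℂ) (L ((starRingEnd ℂ) z))) = f z
    rw [Complex.exp_conj, hexp _ (hconjmem z hz)]
    exact (hf.2 z (hΩsub hz)).symm
  have hL₀ : L ↑x₀ = w₀ := by
    have hrefl : AuxPLift F (Path.refl z₀) (fun _ => w₀) := by
      refine ⟨continuous_const, ?_⟩
      intro t ht
      rw [Path.refl_extend]
      exact hw₀
    have := hW z₀ (Path.refl z₀) _ hrefl rfl
    rw [hLΩ ↑x₀ hx₀Ω]
    exact this.symm
  have heq0 : L ↑x₀ = M ↑x₀ := by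
    rw [hMdef]
    show L ↑x₀ = (starRingEnd ℂ) (L ((starRingEnd ℂ) ↑x₀))
    rw [Complex.conj_ofReal, hL₀, hw₀def, Complex.conj_ofReal]
  have hsym : ∀ z ∈ Ω, L z = M z :=
    aux_sub_const hΩconn.isPreconnected hcont hMc
      (fun z hz => (hexp z hz).trans (hMexp z hz).symm) hx₀Ω heq0
  refine ⟨L, hcont, hexp, fun z hz => hsym z hz, ?_⟩
  intro x hx
  have h2 : L ↑x = (starRingEnd ℂ) (L ((starRingEnd ℂ) ↑x)) := hsym ↑x hx
  rw [Complex.conj_ofReal] at h2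
  exact Complex.conj_eq_iff_im.mp h2.symm
end

section
/- The Bass stable rank of the real Banach algebra A_R(D) is at least 2: there exists a unimodular pair (f_1, f_2) in A_R(D)^2 that is not reducible, i.e., there is no g in A_R(D) such that f_1 + g*f_2 is invertible in A_R(D). For example f_1(z) = z and f_2(z) = 1 - z^2 gives such a pair. -/
open Complex Metric Set

lemma mem_cb {t : ℝ} (ht : t ∈ Icc (-1:ℝ) 1) : (t:ℂ) ∈ closedBall (0:ℂ) 1 := by
  simp only [mem_closedBall, dist_zero_right, Complex.norm_real]
  exact abs_le.mpr ht

theorem stable_rank_at_least_two :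
    (∃ g₁ g₂ : ℂ → ℂ, IsRealDiscAlg g₁ ∧ IsRealDiscAlg g₂ ∧
      ∀ z ∈ closedBall (0:ℂ) 1, z * g₁ z + (1 - z ^ 2) * g₂ z = 1) ∧
    ¬ ∃ g h : ℂ → ℂ, IsRealDiscAlg g ∧ IsRealDiscAlg h ∧
      ∀ z ∈ closedBall (0:ℂ) 1, (z + g z * (1 - z ^ 2)) * h z = 1 := by
  constructor
  · refine ⟨id, fun _ => 1, ⟨⟨continuousOn_id, differentiableOn_id⟩, fun z _ => by simp⟩,
      ⟨⟨continuousOn_const, differentiableOn_const 1⟩, fun z _ => by simp⟩, fun z _ => by simp; ring⟩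
  · rintro ⟨g, h, ⟨⟨hgc, _⟩, hgsym⟩, _, heq⟩
    -- the function t ↦ Re (t + g t (1 - t²)) on [-1,1]
    set φ : ℝ → ℝ := fun t => ((t:ℂ) + g t * (1 - (t:ℂ) ^ 2)).re with hφ
    have hcont : ContinuousOn φ (Icc (-1:ℝ) 1) := by
      apply Complex.continuous_re.comp_continuousOn
      apply ContinuousOn.add
      · exact Complex.continuous_ofReal.continuousOn
      · apply ContinuousOn.mul
        · exact hgc.comp Complex.continuous_ofReal.continuousOn (fun t ht => mem_cb ht)
        · fun_prop
    have hφ1 : φ 1 = 1 := by simp [hφ]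
    have hφm1 : φ (-1) = -1 := by
      simp only [hφ, Complex.ofReal_neg, Complex.ofReal_one]
      norm_num
    have : (0:ℝ) ∈ φ '' (Icc (-1:ℝ) 1) := by
      have := intermediate_value_Icc (by norm_num : (-1:ℝ) ≤ 1) hcont
      apply this
      rw [hφm1, hφ1]
      constructor <;> norm_num
    obtain ⟨t, ht, hφt⟩ := this
    -- g t is real for real t
    have htc : (t:ℂ) ∈ closedBall (0:ℂ) 1 := mem_cb ht
    have hgreal : (starRingEnd ℂ) (g t) = g t := by
      have := hgsym t htc
      rw [Complex.conj_ofReal] at this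
      exact (congrArg (starRingEnd ℂ) this).trans (by simp)
    have hFreal : (starRingEnd ℂ) ((t:ℂ) + g t * (1 - (t:ℂ) ^ 2)) =
        (t:ℂ) + g t * (1 - (t:ℂ) ^ 2) := by
      simp [map_add, map_mul, map_sub, map_pow, Complex.conj_ofReal, hgreal]
    have hF0 : (t:ℂ) + g t * (1 - (t:ℂ) ^ 2) = 0 := by
      have him := Complex.conj_eq_iff_im.mp hFreal
      exact Complex.ext (by simpa [hφ] using hφt) (by simpa using him)
    have := heq t htc
    rw [hF0, zero_mul] at this
    exact zero_ne_one this
end
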